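/- arXiv:2504.15844 — 2 statements merged into one kernel-verified Lean document; each statement's English description precedes it below -/
import Mathlib

section
/- A deterministic simulation of havoc via bit-consumption is surjective: for every integer x there exists a natural number seed such that decoding seed by the procedure 'sign := −(seed mod 2); seed := seed div 2; while seed mod 2 = 1 do (seed := seed div 2; x := 2·x + (seed mod 2); seed := seed div 2); seed := seed div 2' yields x (for an appropriate binary encoding of x into seed). -/
/-! The seed `4 * s + 2 * b + 1` makes the loop continue from `s` with `x` replaced by `2 * x + b`.
Feeding the bits of `n < 2 ^ k`, most significant first, the loop started at `a` therefore reaches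
`a * 2 ^ k + n`. Every integer `x` with `|x| < 2 ^ k` has this form with `a = x / 2 ^ k ∈ {0, -1}`,
which is exactly the range of the sign bit. -/

/-- The bit-consuming loop of the deterministic havoc decoder: while the
next (continuation) bit is 1, consume it together with a data bit, appending
the data bit at the least-significant end of `x`; a 0 continuation bit stops
(and is consumed). -/
def havocLoop (seed : ℕ) (x : ℤ) : ℤ × ℕ :=
  if h : seed % 2 = 1 then
    havocLoop (seed / 4) (2 * x + ((seed / 2) % 2 : ℕ))
  else
    (x, seed / 2)
termination_by seed
decreasing_by
  exact Nat.div_lt_self (Nat.pos_of_ne_zero (by omega)) (by norm_num)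

/-- Deterministic havoc decoding: `x := -(seed % 2); seed := seed / 2;` then
the bit-consuming loop, returning the decoded integer and remaining seed. -/
def havoc (seed : ℕ) : ℤ × ℕ :=
  havocLoop (seed / 2) (-(seed % 2 : ℤ))

lemma havocLoop_zero (x : ℤ) : havocLoop 0 x = (x, 0) := by
  rw [havocLoop]; simp

lemma havocLoop_four_mul_add_two_mul_add_one (seed b : ℕ) (hb : b < 2) (x : ℤ) :
    havocLoop (4 * seed + 2 * b + 1) x = havocLoop seed (2 * x + b) := by
  rw [havocLoop, dif_pos (by omega)]
  congr 3 <;> omega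

lemma havoc_two_mul_add (seed c : ℕ) (hc : c < 2) :
    havoc (2 * seed + c) = havocLoop seed (-c) := by
  unfold havoc
  congr 2 <;> omega

lemma exists_havocLoop_fst_eq (k : ℕ) :
    ∀ (x : ℤ) (n : ℕ), n < 2 ^ k → ∃ seed, (havocLoop seed x).1 = x * 2 ^ k + n := by
  induction k with
  | zero =>
    intro x n hn
    exact ⟨0, by simp [havocLoop_zero, show n = 0 by simpa using hn]⟩
  | succ k ih =>
    intro x n hn
    have hb : n / 2 ^ k < 2 := Nat.div_lt_of_lt_mul (by rwa [← pow_succ])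
    obtain ⟨seed, hseed⟩ :=
      ih (2 * x + (n / 2 ^ k : ℕ)) (n % 2 ^ k) (Nat.mod_lt _ (by positivity))
    refine ⟨4 * seed + 2 * (n / 2 ^ k) + 1, ?_⟩
    have hdiv : ((2 ^ k * (n / 2 ^ k) + n % 2 ^ k : ℕ) : ℤ) = n := by
      exact_mod_cast Nat.div_add_mod n (2 ^ k)
    rw [havocLoop_four_mul_add_two_mul_add_one _ _ hb, hseed, ← hdiv]
    push_cast
    ring

/-- The deterministic simulation of havoc via bit-consumption is surjective:
every integer is decoded from some seed. -/
theorem havoc_surjective : ∀ x : ℤ, ∃ seed : ℕ, (havoc seed).1 = x := by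
  intro x
  obtain ⟨k, hk⟩ := pow_unbounded_of_one_lt |x| (one_lt_two : (1 : ℤ) < 2)
  have hpos : (0 : ℤ) < 2 ^ k := by positivity
  obtain ⟨c, hc, hq⟩ : ∃ c : ℕ, c < 2 ∧ x / 2 ^ k = -c := by
    obtain ⟨hlo, hhi⟩ := abs_lt.mp hk
    rcases lt_or_ge x 0 with hx | hx
    · refine ⟨1, one_lt_two, (Int.ediv_eq_iff_of_pos hpos).2 ?_⟩
      constructor <;> push_cast <;> linarith
    · refine ⟨0, two_pos, (Int.ediv_eq_iff_of_pos hpos).2 ?_⟩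
      constructor <;> push_cast <;> linarith
  lift x % 2 ^ k to ℕ using Int.emod_nonneg x hpos.ne' with n hn
  have hn_lt : n < 2 ^ k := by exact_mod_cast hn ▸ Int.emod_lt_of_pos x hpos
  obtain ⟨seed, hseed⟩ := exists_havocLoop_fst_eq k (-c) n hn_lt
  refine ⟨2 * seed + c, ?_⟩
  rw [havoc_two_mul_add _ _ hc, hseed, ← hq, hn, Int.ediv_mul_add_emod]
end

section
/- Sequential havoc decoding is compositional and surjective on finite sequences: for every finite sequence of integers x1, …, xk there exists a seed such that applying the havoc decoding function k times in sequence (threading the remaining seed) yields exactly x1, …, xk. -/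
/-- Reachability under the bit-appending step `x ↦ 2*x + b`. -/
inductive HReach : ℤ → ℤ → Prop
  | refl (x : ℤ) : HReach x x
  | step (b : ℕ) (hb : b = 0 ∨ b = 1) {x0 x : ℤ}
      (h : HReach (2 * x0 + (b : ℤ)) x) : HReach x0 x

lemma havocLoop_of_hreach {x0 x : ℤ} (h : HReach x0 x) :
    ∀ rest : ℕ, ∃ s : ℕ, havocLoop s x0 = (x, rest) := by
  induction h with
  | refl x =>
      intro rest
      refine ⟨2 * rest, ?_⟩
      rw [havocLoop]
      simp [Nat.mul_div_cancel_left, Nat.mul_mod_right]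
  | step b hb h ih =>
      intro rest
      obtain ⟨s', hs'⟩ := ih rest
      refine ⟨1 + 2 * b + 4 * s', ?_⟩
      rw [havocLoop]
      have h1 : (1 + 2 * b + 4 * s') % 2 = 1 := by omega
      have h2 : (1 + 2 * b + 4 * s') / 4 = s' := by omega
      have h3 : ((1 + 2 * b + 4 * s') / 2) % 2 = b := by omega
      simp only [h1, h2, h3, dif_pos]
      exact hs'

lemma HReach.trans {a b c : ℤ} (h1 : HReach a b) (h2 : HReach b c) : HReach a c := by
  induction h1 with
  | refl => exact h2
  | step d hd h ih => exact HReach.step d hd (ih h2)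

lemma hreach_of_int (x : ℤ) :
    (0 ≤ x → HReach 0 x) ∧ (x < 0 → HReach (-1) x) := by
  have key : ∀ n : ℕ, ∀ x : ℤ, x.natAbs ≤ n →
      (0 ≤ x → HReach 0 x) ∧ (x < 0 → HReach (-1) x) := by
    intro n
    induction n with
    | zero =>
        intro x hx
        have : x = 0 := by omega
        subst this
        exact ⟨fun _ => HReach.refl 0, fun h => absurd h (by omega)⟩
    | succ n ih =>
        intro x hx
        by_cases h0 : x = 0
        · subst h0; exact ⟨fun _ => HReach.refl 0, fun h => absurd h (by omega)⟩
        by_cases h1 : x = -1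
        · subst h1
          exact ⟨fun h => absurd h (by omega), fun _ => HReach.refl (-1)⟩
        have hhalf : (x / 2).natAbs ≤ n := by omega
        obtain ⟨ihp, ihn⟩ := ih (x / 2) hhalf
        have hb : (x % 2).toNat = 0 ∨ (x % 2).toNat = 1 := by omega
        have hx2 : 2 * (x / 2) + ((x % 2).toNat : ℤ) = x := by omega
        have hlast : HReach (x / 2) x :=
          HReach.step (x % 2).toNat hb (by rw [hx2]; exact HReach.refl x)
        constructor
        · intro hpos
          exact (ihp (by omega)).trans hlast
        · intro hneg
          exact (ihn (by omega)).trans hlast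
  exact key x.natAbs x le_rfl

lemma havoc_surj (x : ℤ) (rest : ℕ) : ∃ s : ℕ, havoc s = (x, rest) := by
  by_cases hx : 0 ≤ x
  · obtain ⟨s, hs⟩ := havocLoop_of_hreach ((hreach_of_int x).1 hx) rest
    refine ⟨2 * s, ?_⟩
    rw [havoc]
    simpa [Nat.mul_div_cancel_left, Nat.mul_mod_right] using hs
  · obtain ⟨s, hs⟩ := havocLoop_of_hreach ((hreach_of_int x).2 (by omega)) rest
    refine ⟨1 + 2 * s, ?_⟩
    rw [havoc]
    have h1 : (1 + 2 * s) / 2 = s := by omega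
    have h2 : (((1 + 2 * s : ℕ) : ℤ) % 2) = 1 := by omega
    rw [h1, h2]
    simpa using hs

/-- Sequential havoc decoding is compositional and surjective on finite
sequences: for every list of integers there are seeds, threaded through the
decoder, producing exactly that list. -/
theorem havoc_seq_surjective (L : List ℤ) :
    ∃ seeds : ℕ → ℕ, ∀ (i : ℕ) (h : i < L.length),
      havoc (seeds i) = (L.get ⟨i, h⟩, seeds (i + 1)) := by
  induction L with
  | nil => exact ⟨fun _ => 0, fun i h => absurd h (by simp)⟩
  | cons x L ih =>
      obtain ⟨seeds', hseeds'⟩ := ih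
      obtain ⟨s, hs⟩ := havoc_surj x (seeds' 0)
      refine ⟨fun i => match i with | 0 => s | (i + 1) => seeds' i, fun i h => ?_⟩
      match i with
      | 0 => simpa using hs
      | (i + 1) =>
          have h' : i < L.length := by simpa using h
          simpa using hseeds' i h'
end
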